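/- arXiv:1106.2680 — 10 statements merged into one kernel-verified Lean document; each statement's English description precedes it below -/
import Mathlib

section
/- Let ψ : Z → Z be an F-linear derivation of Z such that ψ(a)D(b) = D(a)ψ(b) for all a, b ∈ Z. Then there exists z ∈ Z such that D(z) is invertible in Z, and there exists c ∈ Z such that ψ(a) = c·D(a) for all a ∈ Z. -/
/-! In characteristic 3 a derivation kills cubes, so `D ((D z) ^ 3) = 0`; hence `(D z) ^ 3` is
a scalar and `D z` is either a unit or nilpotent. The ideal generated by the values of `D` is
`D`-invariant and nonzero, hence everything, and an ideal generated by units and nilpotents is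
proper unless one generator is a unit. With `D z` a unit, `ψ a * D z = D a * ψ z` gives
`ψ = (ψ z / D z) • D`. -/

namespace Derivation

variable {R A : Type*} [CommSemiring R] [CommRing A] [Algebra R A]

theorem map_pow_char_eq_zero (p : ℕ) [CharP A p] (D : Derivation R A A) (a : A) :
    D (a ^ p) = 0 := by
  rw [leibniz_pow, ← Nat.cast_smul_eq_nsmul A, CharP.cast_eq_zero, zero_smul]

theorem map_mem_span_range (D : Derivation R A A) {x : A}
    (hx : x ∈ Ideal.span (Set.range D)) : D x ∈ Ideal.span (Set.range D) := by
  induction hx using Submodule.span_induction with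
  | mem x hx => exact Ideal.subset_span ⟨x, rfl⟩
  | zero => simp
  | add a b _ _ ha hb => rw [map_add]; exact Ideal.add_mem _ ha hb
  | smul b a _ ha =>
      rw [smul_eq_mul, leibniz, smul_eq_mul, smul_eq_mul]
      exact Ideal.add_mem _ (Ideal.mul_mem_left _ _ ha)
        (Ideal.mul_mem_left _ _ (Ideal.subset_span ⟨b, rfl⟩))

end Derivation

theorem isUnit_or_isNilpotent_of_pow_eq_algebraMap {F A : Type*} [Field F] [CommRing A]
    [Algebra F A] {x : A} {n : ℕ} (hn : n ≠ 0) {c : F} (hc : x ^ n = algebraMap F A c) :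
    IsUnit x ∨ IsNilpotent x := by
  rcases eq_or_ne c 0 with rfl | hc0
  · exact Or.inr ⟨n, by rw [hc, map_zero]⟩
  · left
    rw [← isUnit_pow_iff hn, hc]
    exact (IsUnit.mk0 c hc0).map (algebraMap F A)

theorem Ideal.exists_isUnit_of_span_eq_top {A : Type*} [CommRing A] [Nontrivial A]
    {S : Set A} (hS : Ideal.span S = ⊤) (h : ∀ s ∈ S, IsUnit s ∨ IsNilpotent s) :
    ∃ s ∈ S, IsUnit s := by
  by_contra! hno
  have hle : Ideal.span S ≤ nilradical A :=
    Ideal.span_le.mpr fun s hs => mem_nilradical.mpr ((h s hs).resolve_left (hno s hs))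
  rw [hS, top_le_iff] at hle
  exact not_isNilpotent_one (mem_nilradical.mp (hle ▸ Submodule.mem_top))

theorem psi_is_multiple_of_D_general
    {F : Type*} [Field F] [CharP F 3]
    {Z : Type*} [CommRing Z] [Algebra F Z]
    (D : Z →ₗ[F] Z)
    (hD : ∀ a b : Z, D (a * b) = D a * b + a * D b)
    (hD0 : D ≠ 0)
    (hsimple : ∀ I : Ideal Z, (∀ x ∈ I, D x ∈ I) → I = ⊥ ∨ I = ⊤)
    (hker : ∀ a : Z, D a = 0 → ∃ c : F, a = algebraMap F Z c)
    (ψ : Z →ₗ[F] Z)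
    (hcomm : ∀ a b : Z, ψ a * D b = D a * ψ b) :
    (∃ z : Z, IsUnit (D z)) ∧ (∃ c : Z, ∀ a : Z, ψ a = c * D a) := by
  have : Nontrivial Z := by
    refine (subsingleton_or_nontrivial Z).resolve_left fun _ => hD0 ?_
    exact LinearMap.ext fun _ => Subsingleton.elim _ _
  have : CharP Z 3 := charP_of_injective_algebraMap (algebraMap F Z).injective 3
  let δ : Derivation F Z Z :=
    Derivation.mk' D fun a b => by rw [hD, smul_eq_mul, smul_eq_mul]; ring
  have hunit_or_nil : ∀ z, IsUnit (D z) ∨ IsNilpotent (D z) := fun z =>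
    have ⟨c, hc⟩ := hker _ (δ.map_pow_char_eq_zero 3 (D z))
    isUnit_or_isNilpotent_of_pow_eq_algebraMap three_ne_zero hc
  have hspan : Ideal.span (Set.range D) = ⊤ := by
    refine (hsimple _ fun x hx => δ.map_mem_span_range hx).resolve_left ?_
    rw [Ideal.span_eq_bot]
    exact fun h => hD0 (LinearMap.ext fun a => h _ ⟨a, rfl⟩)
  obtain ⟨_, ⟨z, rfl⟩, hz⟩ :=
    Ideal.exists_isUnit_of_span_eq_top hspan (Set.forall_mem_range.mpr hunit_or_nil)
  refine ⟨⟨z, hz⟩, ψ z * ↑hz.unit⁻¹, fun a => ?_⟩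
  calc ψ a = ψ a * D z * ↑hz.unit⁻¹ := by rw [mul_assoc, hz.mul_val_inv, mul_one]
    _ = (ψ z * ↑hz.unit⁻¹) * D a := by rw [hcomm]; ring

/-- Let `F` be a field of characteristic 3 and `Z` a commutative associative unital
`F`-algebra with a nonzero `F`-linear derivation `D` such that the only `D`-invariant
ideals of `Z` are `0` and `Z`, and `D a = 0` only for `a ∈ F·1`.  If `ψ : Z → Z` is an
`F`-linear derivation with `ψ(a)D(b) = D(a)ψ(b)` for all `a, b`, then there exists
`z ∈ Z` with `D z` invertible, and `ψ = c·D` for some `c ∈ Z`. -/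
theorem psi_is_multiple_of_D
    {F : Type*} [Field F] [CharP F 3]
    {Z : Type*} [CommRing Z] [Algebra F Z]
    (D : Z →ₗ[F] Z)
    (hD : ∀ a b : Z, D (a * b) = D a * b + a * D b)
    (hD0 : D ≠ 0)
    (hsimple : ∀ I : Ideal Z, (∀ x ∈ I, D x ∈ I) → I = ⊥ ∨ I = ⊤)
    (hker : ∀ a : Z, D a = 0 → ∃ c : F, a = algebraMap F Z c)
    (ψ : Z →ₗ[F] Z)
    (hψ : ∀ a b : Z, ψ (a * b) = ψ a * b + a * ψ b)
    (hcomm : ∀ a b : Z, ψ a * D b = D a * ψ b) :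
    (∃ z : Z, IsUnit (D z)) ∧ (∃ c : Z, ∀ a : Z, ψ a = c * D a) :=
  psi_is_multiple_of_D_general D hD hD0 hsimple hker ψ hcomm
end

section
/- There exists an element z ∈ Z such that D(z) is invertible in Z. -/
/-!
If no value of `D` were a unit, every `D z` would be nilpotent: in characteristic `3` the
derivation kills cubes, so `(D z) ^ 3` is a scalar, and a non-unit whose power is a nonzero
scalar cannot exist. The ideal generated by the values of `D` is `D`-invariant and nonzero, hence
all of `Z`; but an ideal generated by nilpotent elements lies in the nilradical and is proper.
-/

theorem Derivation.map_pow_eq_zero_of_natCast_eq_zero {R A : Type*} [CommSemiring R]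
    [CommSemiring A] [Algebra R A] (D : Derivation R A A) {n : ℕ} (hn : (n : A) = 0) (a : A) :
    D (a ^ n) = 0 := by
  rw [D.leibniz_pow, nsmul_eq_mul, hn, zero_mul]

theorem isNilpotent_of_pow_eq_algebraMap_of_not_isUnit {R A : Type*} [Field R] [CommRing A]
    [Algebra R A] {x : A} {n : ℕ} (hn : n ≠ 0) (hx : ¬IsUnit x) {c : R}
    (hc : x ^ n = algebraMap R A c) : IsNilpotent x := by
  obtain rfl | hc0 := eq_or_ne c 0
  · exact ⟨n, by rw [hc, map_zero]⟩
  · refine absurd ((isUnit_pow_iff hn).1 ?_) hx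
    rw [hc]
    exact (IsUnit.mk0 c hc0).map (algebraMap R A)

theorem Ideal.span_ne_top_of_forall_isNilpotent {R : Type*} [CommSemiring R] [Nontrivial R]
    {s : Set R} (hs : ∀ x ∈ s, IsNilpotent x) : Ideal.span s ≠ ⊤ := by
  intro htop
  have hle : Ideal.span s ≤ nilradical R := Ideal.span_le.2 hs
  exact not_isNilpotent_one (hle (htop ▸ Submodule.mem_top))

/-- Let `F` be a field of characteristic 3 and `Z` a commutative associative unital
`F`-algebra with a nonzero `F`-linear derivation `D` such that the only `D`-invariant
ideals of `Z` are `0` and `Z`, and `D a = 0` only for `a ∈ F·1`.  Then there exists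
`z ∈ Z` such that `D z` is invertible in `Z`. -/
theorem exists_invertible_D_value
    {F : Type*} [Field F] [CharP F 3]
    {Z : Type*} [CommRing Z] [Algebra F Z]
    (D : Z →ₗ[F] Z)
    (hD : ∀ a b : Z, D (a * b) = D a * b + a * D b)
    (hD0 : D ≠ 0)
    (hsimple : ∀ I : Ideal Z, (∀ x ∈ I, D x ∈ I) → I = ⊥ ∨ I = ⊤)
    (hker : ∀ a : Z, D a = 0 → ∃ c : F, a = algebraMap F Z c) :
    ∃ z : Z, IsUnit (D z) := by
  by_contra! hunit
  let δ : Derivation F Z Z := .mk' D fun a b => by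
    rw [hD, smul_eq_mul, smul_eq_mul, mul_comm b, add_comm]
  have h3 : ((3 : ℕ) : Z) = 0 := by
    rw [← map_natCast (algebraMap F Z), CharP.cast_eq_zero, map_zero]
  have hnil (z : Z) : IsNilpotent (D z) := by
    obtain ⟨c, hc⟩ := hker _ (δ.map_pow_eq_zero_of_natCast_eq_zero h3 (D z))
    exact isNilpotent_of_pow_eq_algebraMap_of_not_isUnit three_ne_zero (hunit z) hc
  obtain ⟨z₀, hz₀⟩ : ∃ z, D z ≠ 0 := by simpa [DFunLike.ne_iff] using hD0
  have : Nontrivial Z := nontrivial_of_ne _ _ hz₀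
  have hinvariant : ∀ x ∈ Ideal.span (Set.range D), D x ∈ Ideal.span (Set.range D) :=
    fun x _ => Ideal.subset_span ⟨x, rfl⟩
  rcases hsimple _ hinvariant with hbot | htop
  · exact hz₀ (Ideal.span_eq_bot.1 hbot _ ⟨z₀, rfl⟩)
  · exact Ideal.span_ne_top_of_forall_isNilpotent (by rintro _ ⟨z, rfl⟩; exact hnil z) htop
end

section
/- Let ψ, μ : Z → Z be F-linear maps and let φ : V → V be the odd F-linear map defined by φ(a,b) = (μ(b), ψ(a)). If φ is a ½-derivation of V (i.e. φ(x·y) = ½(φ(x)·y + x·φ(y)) for all x, y ∈ V), or φ is an odd ½-superderivation of V, then μ(a) = D(ψ(a)) + a·μ(1) for all a ∈ Z, and there exists c ∈ Z with ψ(a) = c·D(a) for all a ∈ Z. -/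
/-- The product of the Jordan superalgebra `V_{1/2}(Z,D)` on `Z × Z`
(even part `Z × 0`, odd part `0 × Z`):
`(a,b)·(c,d) = (ac + D(b)d − bD(d), (1/2)(ad + bc))`. -/
def vmul {F : Type*} [Field F] {Z : Type*} [CommRing Z] [Algebra F Z]
    (D : Z →ₗ[F] Z) (x y : Z × Z) : Z × Z :=
  (x.1 * y.1 + D x.2 * y.2 - x.2 * D y.2, (1 / 2 : F) • (x.1 * y.2 + x.2 * y.1))

/-- `φ` is an odd `δ`-superderivation of `V_{1/2}(Z,D)`: it interchanges the even and the
odd part, and for homogeneous `x, y` it satisfies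
`φ(x·y) = δ(φ(x)·y + (−1)^{p(x)} x·φ(y))`. -/
def IsOddSuperDer {F : Type*} [Field F] {Z : Type*} [CommRing Z] [Algebra F Z]
    (D : Z →ₗ[F] Z) (δ : F) (φ : Z × Z → Z × Z) : Prop :=
  (∀ a : Z, (φ (a, 0)).1 = 0) ∧ (∀ b : Z, (φ (0, b)).2 = 0) ∧
  (∀ x y : Z × Z, x.2 = 0 → (y.1 = 0 ∨ y.2 = 0) →
    φ (vmul D x y) = δ • (vmul D (φ x) y + vmul D x (φ y))) ∧
  (∀ x y : Z × Z, x.1 = 0 → (y.1 = 0 ∨ y.2 = 0) →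
    φ (vmul D x y) = δ • (vmul D (φ x) y - vmul D x (φ y)))

/-- `χ` lies in the centroid of `V_{1/2}(Z,D)`:
`χ(x·y) = χ(x)·y = x·χ(y)` for all `x, y`. -/
def InCentroid {F : Type*} [Field F] {Z : Type*} [CommRing Z] [Algebra F Z]
    (D : Z →ₗ[F] Z) (χ : Z × Z → Z × Z) : Prop :=
  ∀ x y : Z × Z, χ (vmul D x y) = vmul D (χ x) y ∧ χ (vmul D x y) = vmul D x (χ y)

/-- `χ` lies in the odd part of the supercentroid of `V_{1/2}(Z,D)`: it is odd and
`χ(x·y) = χ(x)·y = (−1)^{p(x)} x·χ(y)` for all homogeneous `x, y`. -/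
def InOddSupercentroid {F : Type*} [Field F] {Z : Type*} [CommRing Z] [Algebra F Z]
    (D : Z →ₗ[F] Z) (χ : Z × Z → Z × Z) : Prop :=
  (∀ a : Z, (χ (a, 0)).1 = 0) ∧ (∀ b : Z, (χ (0, b)).2 = 0) ∧
  (∀ x y : Z × Z, (x.1 = 0 ∨ x.2 = 0) → (y.1 = 0 ∨ y.2 = 0) →
    χ (vmul D x y) = vmul D (χ x) y) ∧
  (∀ x y : Z × Z, x.2 = 0 → (y.1 = 0 ∨ y.2 = 0) →
    χ (vmul D x y) = vmul D x (χ y)) ∧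
  (∀ x y : Z × Z, x.1 = 0 → (y.1 = 0 ∨ y.2 = 0) →
    χ (vmul D x y) = - vmul D x (χ y))

/-!
On products `(a,0)·y` with `y` homogeneous the ½-derivation and the odd ½-superderivation
conditions coincide. Since `1/2 = -1` in characteristic 3, the products `(a,0)·(0,d)` and
`(a,0)·(c,0)` give `μ(ad) = D(ψa)·d − ψa·D(d) + a·μ(d)` and make `ψ` a derivation. Taking `d = 1`
gives the formula for `μ`; substituting it back yields `D(a)ψ(d) = D(d)ψ(a)`. The ideal generated
by `D(Z)` is `D`-invariant and nonzero, so `1 = Σ rᵢ D(aᵢ)`, and then `ψ = c·D` with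
`c = Σ rᵢ ψ(aᵢ)`.
-/

theorem one_div_two_eq_neg_one_of_charP_three {K : Type*} [Field K] [CharP K 3] :
    (1 / 2 : K) = -1 := by
  have h2 : (2 : K) = -1 := by linear_combination (CharP.cast_eq_zero K 3 : ((3 : ℕ) : K) = 0)
  rw [h2, one_div, inv_neg, inv_one]

theorem map_one_eq_zero_of_leibniz {R : Type*} [NonAssocRing R] {D : R → R}
    (hD : ∀ a b, D (a * b) = D a * b + a * D b) : D 1 = 0 := by
  simpa using hD 1 1

theorem span_range_eq_top_of_leibniz {R A : Type*} [Semiring R] [CommRing A] [Module R A]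
    (D : A →ₗ[R] A) (hD : ∀ a b, D (a * b) = D a * b + a * D b) (hD0 : D ≠ 0)
    (hsimple : ∀ I : Ideal A, (∀ x ∈ I, D x ∈ I) → I = ⊥ ∨ I = ⊤) :
    Ideal.span (Set.range D) = ⊤ := by
  set I := Ideal.span (Set.range D)
  have hgen : ∀ a, D a ∈ I := fun a => Ideal.subset_span ⟨a, rfl⟩
  have hinv : ∀ x ∈ I, D x ∈ I := by
    intro x hx
    induction hx using Submodule.span_induction with
    | mem _ hx => obtain ⟨a, rfl⟩ := hx; exact hgen _
    | zero => simp
    | add x y _ _ hx hy => simpa using add_mem hx hy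
    | smul r x _ hx =>
      rw [smul_eq_mul, hD]
      exact add_mem (I.mul_mem_right x (hgen r)) (I.mul_mem_left r hx)
  refine (hsimple I hinv).resolve_left fun hbot => hD0 ?_
  ext a
  exact (Ideal.span_eq_bot.mp hbot) _ ⟨a, rfl⟩

theorem exists_eq_mul_of_span_range_eq_top {A : Type*} [CommRing A] {D ψ : A → A}
    (hspan : Ideal.span (Set.range D) = ⊤) (hcomm : ∀ a b, D a * ψ b = D b * ψ a) :
    ∃ c, ∀ a, ψ a = c * D a := by
  have h1 : (1 : A) ∈ Ideal.span (Set.range D) := hspan ▸ Submodule.mem_top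
  obtain ⟨r, hr⟩ := Finsupp.mem_span_range_iff_exists_finsupp.mp h1
  refine ⟨r.sum fun i x => x * ψ i, fun a => ?_⟩
  calc ψ a = (r.sum fun i x => x • D i) * ψ a := by rw [hr, one_mul]
    _ = (r.sum fun i x => x * ψ i) * D a := by
      simp only [Finsupp.sum_mul, smul_eq_mul, mul_assoc, hcomm _ a, mul_comm (D a)]

section HalfDerivation

variable {F : Type*} [Field F] {Z : Type*} [CommRing Z] [Algebra F Z] (D : Z →ₗ[F] Z)

theorem leibniz_even_left_of_or_isOddSuperDer {δ : F} {φ : Z × Z → Z × Z}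
    (hder : (∀ x y, φ (vmul D x y) = δ • (vmul D (φ x) y + vmul D x (φ y))) ∨
      IsOddSuperDer D δ φ)
    (a : Z) {y : Z × Z} (hy : y.1 = 0 ∨ y.2 = 0) :
    φ (vmul D (a, 0) y) = δ • (vmul D (φ (a, 0)) y + vmul D (a, 0) (φ y)) := by
  rcases hder with h | ⟨-, -, h, -⟩
  · exact h _ _
  · exact h _ _ rfl hy

variable {ψ μ : Z →ₗ[F] Z} {φ : Z × Z →ₗ[F] Z × Z} (hφ : ∀ a b, φ (a, b) = (μ b, ψ a))
include hφ

theorem mu_mul_of_leibniz_even_odd (h2 : (2 : F) ≠ 0) {a d : Z}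
    (h : φ (vmul D (a, 0) (0, d)) =
      (1 / 2 : F) • (vmul D (φ (a, 0)) (0, d) + vmul D (a, 0) (φ (0, d)))) :
    μ (a * d) = D (ψ a) * d - ψ a * D d + a * μ d := by
  simp only [vmul, hφ, map_zero, map_smul, mul_zero, zero_mul, add_zero, zero_add,
      sub_zero, smul_zero, Prod.mk_add_mk, Prod.smul_mk, Prod.mk.injEq] at h
  exact smul_right_injective Z (one_div_ne_zero h2) h.1

theorem psi_mul_of_leibniz_even_even [CharP F 3] {a c : Z}
    (h : φ (vmul D (a, 0) (c, 0)) =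
      (1 / 2 : F) • (vmul D (φ (a, 0)) (c, 0) + vmul D (a, 0) (φ (c, 0)))) :
    ψ (a * c) = ψ a * c + a * ψ c := by
  simp only [vmul, hφ, map_zero, mul_zero, zero_mul, add_zero, zero_add, sub_zero,
      smul_zero, Prod.mk_add_mk, one_div_two_eq_neg_one_of_charP_three, neg_one_smul,
      Prod.neg_mk, neg_add, neg_zero, neg_neg, Prod.mk.injEq] at h
  simpa [mul_comm c] using h.2

end HalfDerivation

section Leibniz

variable {R Z : Type*} [Semiring R] [CommRing Z] [Module R Z] (D : Z →ₗ[R] Z) {ψ μ : Z → Z}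

theorem eq_map_add_mul_map_one_of_map_mul_eq (hD1 : D 1 = 0)
    (hμ : ∀ a d, μ (a * d) = D (ψ a) * d - ψ a * D d + a * μ d) (a : Z) :
    μ a = D (ψ a) + a * μ 1 := by
  simpa [hD1] using hμ a 1

theorem mul_psi_comm_of_mu_mul (hD : ∀ a b, D (a * b) = D a * b + a * D b)
    (h3 : (3 : Z) = 0) (hψ : ∀ a c, ψ (a * c) = ψ a * c + a * ψ c)
    (hμ : ∀ a d, μ (a * d) = D (ψ a) * d - ψ a * D d + a * μ d)
    (hμ₁ : ∀ a, μ a = D (ψ a) + a * μ 1) (a d : Z) :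
    D a * ψ d = D d * ψ a := by
  have hDψ : D (ψ (a * d)) = D (ψ a) * d + ψ a * D d + D a * ψ d + a * D (ψ d) := by
    rw [hψ, map_add, hD, hD]
    ring
  linear_combination hμ a d - hμ₁ (a * d) + a * hμ₁ d - hDψ - ψ a * D d * h3

end Leibniz

theorem odd_half_der_mu_psi_formula_general
    {F : Type*} [Field F] [CharP F 3]
    {Z : Type*} [CommRing Z] [Algebra F Z]
(D : Z →ₗ[F] Z)
    (hD : ∀ a b : Z, D (a * b) = D a * b + a * D b)
    (hD0 : D ≠ 0)
    (hsimple : ∀ I : Ideal Z, (∀ x ∈ I, D x ∈ I) → I = ⊥ ∨ I = ⊤)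
    (ψ μ : Z →ₗ[F] Z)
    (φ : Z × Z →ₗ[F] Z × Z)
    (hφ : ∀ a b : Z, φ (a, b) = (μ b, ψ a))
    (hder :
      (∀ x y : Z × Z, φ (vmul D x y) = (1 / 2 : F) • (vmul D (φ x) y + vmul D x (φ y))) ∨
      IsOddSuperDer D (1 / 2 : F) ⇑φ) :
    (∀ a : Z, μ a = D (ψ a) + a * μ 1) ∧ (∃ c : Z, ∀ a : Z, ψ a = c * D a) := by
  have h2 : (2 : F) ≠ 0 := Ring.two_ne_zero (by rw [ringChar.eq F 3]; decide)
  have h3 : (3 : Z) = 0 := by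
    have := congrArg (algebraMap F Z) (CharP.cast_eq_zero F 3)
    rwa [map_natCast, map_zero, Nat.cast_ofNat] at this
  have hleib := leibniz_even_left_of_or_isOddSuperDer D hder
  have hμ : ∀ a d, μ (a * d) = D (ψ a) * d - ψ a * D d + a * μ d := fun a d =>
    mu_mul_of_leibniz_even_odd D hφ h2 (hleib a (Or.inl rfl))
  have hψ : ∀ a c, ψ (a * c) = ψ a * c + a * ψ c := fun a c =>
    psi_mul_of_leibniz_even_even D hφ (hleib a (Or.inr rfl))
  have hμ₁ := eq_map_add_mul_map_one_of_map_mul_eq D (map_one_eq_zero_of_leibniz hD) hμ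
  exact ⟨hμ₁, exists_eq_mul_of_span_range_eq_top (span_range_eq_top_of_leibniz D hD hD0 hsimple)
    (mul_psi_comm_of_mu_mul D hD h3 hψ hμ hμ₁)⟩

/-- (char F = 3)  If the odd linear map `φ(a,b) = (μ(b), ψ(a))` on `V_{1/2}(Z,D)` is a
½-derivation or an odd ½-superderivation, then `μ(a) = D(ψ(a)) + a·μ(1)` for all `a`,
and `ψ = c·D` for some `c ∈ Z`. -/
theorem odd_half_der_mu_psi_formula
    {F : Type*} [Field F] [CharP F 3]
    {Z : Type*} [CommRing Z] [Algebra F Z]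
(D : Z →ₗ[F] Z)
    (hD : ∀ a b : Z, D (a * b) = D a * b + a * D b)
    (hD0 : D ≠ 0)
    (hsimple : ∀ I : Ideal Z, (∀ x ∈ I, D x ∈ I) → I = ⊥ ∨ I = ⊤)
    (hker : ∀ a : Z, D a = 0 → ∃ c : F, a = algebraMap F Z c)
    (ψ μ : Z →ₗ[F] Z)
    (φ : Z × Z →ₗ[F] Z × Z)
    (hφ : ∀ a b : Z, φ (a, b) = (μ b, ψ a))
    (hder :
      (∀ x y : Z × Z, φ (vmul D x y) = (1 / 2 : F) • (vmul D (φ x) y + vmul D x (φ y))) ∨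
      IsOddSuperDer D (1 / 2 : F) ⇑φ) :
    (∀ a : Z, μ a = D (ψ a) + a * μ 1) ∧ (∃ c : Z, ∀ a : Z, ψ a = c * D a) :=
  odd_half_der_mu_psi_formula_general D hD hD0 hsimple ψ μ φ hφ hder
end

section
/- Let ψ, μ : Z → Z be F-linear maps and let φ : V → V be the odd F-linear map defined by φ(a,b) = (μ(b), ψ(a)). If φ is a ½-derivation of V (i.e. φ(x·y) = ½(φ(x)·y + x·φ(y)) for all x, y ∈ V), or φ is an odd ½-superderivation of V, then ψ is a derivation of Z: ψ(ab) = ψ(a)b + aψ(b) for all a, b ∈ Z. -/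
theorem half_mul_half_of_charP_three {F : Type*} [Field F] [CharP F 3] :
    (1 / 2 : F) * (1 / 2) = 1 := by
  have h3 : (3 : F) = 0 := by exact_mod_cast CharP.cast_eq_zero F 3
  have h2 : (2 : F) ≠ 0 := fun h => one_ne_zero (by linear_combination h3 - h : (1 : F) = 0)
  field_simp
  linear_combination -h3

theorem apply_mul_eq_smul_leibniz_of_oddMap {F : Type*} [Field F] {Z : Type*} [CommRing Z]
    [Algebra F Z] (D : Z →ₗ[F] Z) {δ : F} {ψ μ : Z → Z} {φ : Z × Z → Z × Z}
    (hφ : ∀ a b : Z, φ (a, b) = (μ b, ψ a)) {a b : Z}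
    (h : φ (vmul D (a, 0) (b, 0)) = δ • (vmul D (φ (a, 0)) (b, 0) + vmul D (a, 0) (φ (b, 0)))) :
    ψ (a * b) = (δ * (1 / 2)) • (ψ a * b + a * ψ b) := by
  simpa [vmul, hφ, smul_add, mul_smul] using congrArg Prod.snd h

theorem odd_half_der_psi_is_derivation_general
    {F : Type*} [Field F] [CharP F 3]
    {Z : Type*} [CommRing Z] [Algebra F Z]
(D : Z →ₗ[F] Z)
    (ψ μ : Z →ₗ[F] Z)
    (φ : Z × Z →ₗ[F] Z × Z)
    (hφ : ∀ a b : Z, φ (a, b) = (μ b, ψ a))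
    (hder :
      (∀ x y : Z × Z, φ (vmul D x y) = (1 / 2 : F) • (vmul D (φ x) y + vmul D x (φ y))) ∨
      IsOddSuperDer D (1 / 2 : F) ⇑φ) :
    ∀ a b : Z, ψ (a * b) = ψ a * b + a * ψ b := by
  intro a b
  have hLeibniz : φ (vmul D (a, 0) (b, 0)) =
      (1 / 2 : F) • (vmul D (φ (a, 0)) (b, 0) + vmul D (a, 0) (φ (b, 0))) := by
    rcases hder with hder | ⟨-, -, hEven, -⟩
    · exact hder (a, 0) (b, 0)
    · exact hEven (a, 0) (b, 0) rfl (Or.inr rfl)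
  rw [apply_mul_eq_smul_leibniz_of_oddMap D hφ hLeibniz, half_mul_half_of_charP_three, one_smul]

/-- (char F = 3)  If the odd linear map `φ(a,b) = (μ(b), ψ(a))` on `V_{1/2}(Z,D)` is a
½-derivation or an odd ½-superderivation, then `ψ` is a derivation of `Z`. -/
theorem odd_half_der_psi_is_derivation
    {F : Type*} [Field F] [CharP F 3]
    {Z : Type*} [CommRing Z] [Algebra F Z]
(D : Z →ₗ[F] Z)
    (hD : ∀ a b : Z, D (a * b) = D a * b + a * D b)
    (hD0 : D ≠ 0)
    (hsimple : ∀ I : Ideal Z, (∀ x ∈ I, D x ∈ I) → I = ⊥ ∨ I = ⊤)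
    (hker : ∀ a : Z, D a = 0 → ∃ c : F, a = algebraMap F Z c)
    (ψ μ : Z →ₗ[F] Z)
    (φ : Z × Z →ₗ[F] Z × Z)
    (hφ : ∀ a b : Z, φ (a, b) = (μ b, ψ a))
    (hder :
      (∀ x y : Z × Z, φ (vmul D x y) = (1 / 2 : F) • (vmul D (φ x) y + vmul D x (φ y))) ∨
      IsOddSuperDer D (1 / 2 : F) ⇑φ) :
    ∀ a b : Z, ψ (a * b) = ψ a * b + a * ψ b :=
  odd_half_der_psi_is_derivation_general D ψ μ φ hφ hder
end

section
/- Let ψ, μ : Z → Z be F-linear maps and let φ : V → V be the odd F-linear map defined by φ(a,b) = (μ(b), ψ(a)). If φ is a ½-derivation of V (i.e. φ(x·y) = ½(φ(x)·y + x·φ(y)) for all x, y ∈ V), or φ is an odd ½-superderivation of V, then D(a)ψ(b) = ψ(a)D(b) for all a, b ∈ Z. -/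
/-!
Evaluating the ½-derivation identity on `(a,0)·(b,0)` shows that `ψ` is a derivation of `Z`,
and on `(a,0)·(0,b)` that `μ(ab) = aμ(b) + bD(ψa) − ψ(a)D(b)`. Putting `b = 1` gives
`μ(a) = aμ(1) + D(ψa)`; substituting this back and expanding `D(ψ(ab))` by the Leibniz rules
leaves `D(a)ψ(b) = −2ψ(a)D(b)`, which is the claim since `−2 = 1` in characteristic 3.
-/

section CharThree

variable {F : Type*} [Field F] [CharP F 3]

theorem one_div_two_mul_one_div_two_of_charP_three : (1 / 2 : F) * (1 / 2) = 1 := by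
  have h3 : (3 : F) = 0 := by exact_mod_cast CharP.cast_eq_zero F 3
  have h4 : (2 : F) * 2 = 1 := by linear_combination h3
  rw [div_mul_div_comm, one_mul, h4, div_one]

theorem one_div_two_smul_one_div_two_smul_of_charP_three {M : Type*} [AddCommGroup M]
    [Module F M] (u : M) : (1 / 2 : F) • (1 / 2 : F) • u = u := by
  rw [smul_smul, one_div_two_mul_one_div_two_of_charP_three, one_smul]

theorem three_eq_zero_of_charP_three (Z : Type*) [Ring Z] [Algebra F Z] : (3 : Z) = 0 := by
  simpa [map_ofNat] using congrArg (algebraMap F Z) (CharP.cast_eq_zero F 3)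

end CharThree

theorem cross_eq_of_leibniz_of_twisted_leibniz {Z : Type*} [CommRing Z] (h3 : (3 : Z) = 0)
    (D : Z →+ Z) (ψ μ : Z → Z)
    (hD : ∀ a b : Z, D (a * b) = D a * b + a * D b)
    (hψ : ∀ a b : Z, ψ (a * b) = a * ψ b + b * ψ a)
    (hμ : ∀ a b : Z, μ (a * b) = a * μ b + b * D (ψ a) - ψ a * D b) (a b : Z) :
    D a * ψ b = ψ a * D b := by
  have hD1 : D 1 = 0 := by simpa using hD 1 1
  have hμ_one : ∀ c : Z, μ c = c * μ 1 + D (ψ c) := fun c => by simpa [hD1] using hμ c 1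
  have hDψ : D (ψ (a * b)) = D a * ψ b + a * D (ψ b) + D b * ψ a + b * D (ψ a) := by
    rw [hψ, map_add, hD, hD]; ring
  have hab := hμ a b
  rw [hμ_one (a * b), hμ_one b, hDψ] at hab
  linear_combination hab - h3 * (ψ a * D b)

section HalfDerivation

variable {F : Type*} [Field F] {Z : Type*} [CommRing Z] [Algebra F Z] (D : Z →ₗ[F] Z)

theorem vmul_even_even (a b : Z) : vmul D (a, 0) (b, 0) = (a * b, 0) := by
  simp [vmul]

theorem vmul_even_odd (a b : Z) : vmul D (a, 0) (0, b) = (0, (1 / 2 : F) • (a * b)) := by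
  simp [vmul]

theorem vmul_odd_even (a b : Z) : vmul D (0, a) (b, 0) = (0, (1 / 2 : F) • (a * b)) := by
  simp [vmul, mul_comm]

theorem vmul_odd_odd (a b : Z) : vmul D (0, a) (0, b) = (D a * b - a * D b, 0) := by
  simp [vmul]

/-- The common consequence of being a ½-derivation and an odd ½-superderivation: for even `x`
the sign `(−1)^{p(x)}` is `+1`, so both give `φ(x·y) = ½(φ(x)·y + x·φ(y))` for homogeneous `y`. -/
def IsHalfDerOnEvenLeft (φ : Z × Z → Z × Z) : Prop :=
  ∀ (a : Z) (y : Z × Z), (y.1 = 0 ∨ y.2 = 0) →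
    φ (vmul D (a, 0) y) = (1 / 2 : F) • (vmul D (φ (a, 0)) y + vmul D (a, 0) (φ y))

variable [CharP F 3] {ψ μ : Z →ₗ[F] Z} {φ : Z × Z → Z × Z}

theorem leibniz_of_isHalfDerOnEvenLeft (hφ : ∀ a b : Z, φ (a, b) = (μ b, ψ a))
    (h : IsHalfDerOnEvenLeft D φ) (a b : Z) : ψ (a * b) = a * ψ b + b * ψ a := by
  have hab := congrArg Prod.snd (h a (b, 0) (Or.inr rfl))
  simp only [vmul_even_even, hφ, vmul_odd_even, vmul_even_odd, map_zero, Prod.mk_add_mk,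
    zero_add, Prod.smul_mk, ← smul_add, one_div_two_smul_one_div_two_smul_of_charP_three] at hab
  linear_combination hab

theorem twisted_leibniz_of_isHalfDerOnEvenLeft (hφ : ∀ a b : Z, φ (a, b) = (μ b, ψ a))
    (h : IsHalfDerOnEvenLeft D φ) (a b : Z) :
    μ (a * b) = a * μ b + b * D (ψ a) - ψ a * D b := by
  have hab := congrArg (fun x => (1 / 2 : F) • x.1) (h a (0, b) (Or.inl rfl))
  simp only [vmul_even_odd, hφ, vmul_odd_odd, vmul_even_even, map_smul, map_zero,
    Prod.mk_add_mk, add_zero, Prod.smul_mk, one_div_two_smul_one_div_two_smul_of_charP_three]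
    at hab
  linear_combination hab

end HalfDerivation

theorem odd_half_der_psi_commutes_with_D_general
    {F : Type*} [Field F] [CharP F 3]
    {Z : Type*} [CommRing Z] [Algebra F Z]
(D : Z →ₗ[F] Z)
    (hD : ∀ a b : Z, D (a * b) = D a * b + a * D b)
    (ψ μ : Z →ₗ[F] Z)
    (φ : Z × Z →ₗ[F] Z × Z)
    (hφ : ∀ a b : Z, φ (a, b) = (μ b, ψ a))
    (hder :
      (∀ x y : Z × Z, φ (vmul D x y) = (1 / 2 : F) • (vmul D (φ x) y + vmul D x (φ y))) ∨
      IsOddSuperDer D (1 / 2 : F) ⇑φ) :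
    ∀ a b : Z, D a * ψ b = ψ a * D b := by
  have h : IsHalfDerOnEvenLeft D φ := by
    rcases hder with hder | ⟨-, -, hEven, -⟩
    · exact fun a y _ => hder (a, 0) y
    · exact fun a y hy => hEven (a, 0) y rfl hy
  exact cross_eq_of_leibniz_of_twisted_leibniz (three_eq_zero_of_charP_three (F := F) Z)
    D.toAddMonoidHom ψ μ hD (leibniz_of_isHalfDerOnEvenLeft D hφ h)
    (twisted_leibniz_of_isHalfDerOnEvenLeft D hφ h)

/-- (char F = 3)  If the odd linear map `φ(a,b) = (μ(b), ψ(a))` on `V_{1/2}(Z,D)` is a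
½-derivation or an odd ½-superderivation, then `D(a)ψ(b) = ψ(a)D(b)` for all `a, b`. -/
theorem odd_half_der_psi_commutes_with_D
    {F : Type*} [Field F] [CharP F 3]
    {Z : Type*} [CommRing Z] [Algebra F Z]
(D : Z →ₗ[F] Z)
    (hD : ∀ a b : Z, D (a * b) = D a * b + a * D b)
    (hD0 : D ≠ 0)
    (hsimple : ∀ I : Ideal Z, (∀ x ∈ I, D x ∈ I) → I = ⊥ ∨ I = ⊤)
    (hker : ∀ a : Z, D a = 0 → ∃ c : F, a = algebraMap F Z c)
    (ψ μ : Z →ₗ[F] Z)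
    (φ : Z × Z →ₗ[F] Z × Z)
    (hφ : ∀ a b : Z, φ (a, b) = (μ b, ψ a))
    (hder :
      (∀ x y : Z × Z, φ (vmul D x y) = (1 / 2 : F) • (vmul D (φ x) y + vmul D x (φ y))) ∨
      IsOddSuperDer D (1 / 2 : F) ⇑φ) :
    ∀ a b : Z, D a * ψ b = ψ a * D b :=
  odd_half_der_psi_commutes_with_D_general D hD ψ μ φ hφ hder
end

section
/- Let F be a field, δ ∈ F with δ ≠ 0, and let A₁, A₂ be (not necessarily associative or unital) F-algebras such that each Aᵢ contains an element eᵢ with the property that eᵢ·x = 0 implies x = 0 for x ∈ Aᵢ. Let φ be a δ-derivation of the product algebra A = A₁ × A₂ (with componentwise operations). Then φ(A₁ × {0}) ⊆ A₁ × {0} and φ({0} × A₂) ⊆ {0} × A₂. -/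
/-!
Feed the Leibniz rule a product that vanishes: for `x * y = 0` it gives
`φ x * y + x * φ y = 0`, since `δ ≠ 0` can be cancelled. Taking `x = (0, e₂)` and `y = (a, 0)`,
the second component reads `e₂ * (φ (a, 0)).2 = 0`, so `(φ (a, 0)).2 = 0` by the choice of `e₂`;
symmetrically with `(e₁, 0)` and `(0, b)`.
-/

theorem LinearMap.mul_add_mul_eq_zero_of_smul_leibniz
    {R A : Type*} [Semiring R] [IsCancelMulZero R] [NonUnitalNonAssocRing A] [Module R A]
    [Module.IsTorsionFree R A] {δ : R} (hδ : δ ≠ 0) {φ : A →ₗ[R] A}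
    (hφ : ∀ x y : A, φ (x * y) = δ • (φ x * y + x * φ y)) {x y : A} (hxy : x * y = 0) :
    φ x * y + x * φ y = 0 := by
  rw [← smul_eq_zero_iff_right hδ, ← hφ, hxy, map_zero]

theorem delta_derivation_preserves_factors_general
    {F : Type*} [Field F] (δ : F) (hδ : δ ≠ 0)
    {A₁ A₂ : Type*}
    [NonUnitalNonAssocRing A₁] [Module F A₁]
    [NonUnitalNonAssocRing A₂] [Module F A₂]
    (e₁ : A₁) (he₁ : ∀ x : A₁, e₁ * x = 0 → x = 0)
    (e₂ : A₂) (he₂ : ∀ x : A₂, e₂ * x = 0 → x = 0)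
    (φ : A₁ × A₂ →ₗ[F] A₁ × A₂)
    (hφ : ∀ x y : A₁ × A₂, φ (x * y) = δ • (φ x * y + x * φ y)) :
    (∀ x : A₁, (φ (x, 0)).2 = 0) ∧ (∀ y : A₂, (φ (0, y)).1 = 0) := by
  constructor
  · intro x
    have h := φ.mul_add_mul_eq_zero_of_smul_leibniz hδ hφ (x := (0, e₂)) (y := (x, 0)) (by simp)
    exact he₂ _ (by simpa using congrArg Prod.snd h)
  · intro y
    have h := φ.mul_add_mul_eq_zero_of_smul_leibniz hδ hφ (x := (e₁, 0)) (y := (0, y)) (by simp)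
    exact he₁ _ (by simpa using congrArg Prod.fst h)

/-- Let `δ ≠ 0` and let `A₁`, `A₂` be (not necessarily associative or unital)
`F`-algebras, each containing an element `eᵢ` such that `eᵢ·x = 0` implies `x = 0`.
Then every `δ`-derivation `φ` of the product algebra `A₁ × A₂` preserves the two
factors: `φ(A₁ × 0) ⊆ A₁ × 0` and `φ(0 × A₂) ⊆ 0 × A₂`. -/
theorem delta_derivation_preserves_factors
    {F : Type*} [Field F] (δ : F) (hδ : δ ≠ 0)
    {A₁ A₂ : Type*}
    [NonUnitalNonAssocRing A₁] [Module F A₁]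
    [SMulCommClass F A₁ A₁] [IsScalarTower F A₁ A₁]
    [NonUnitalNonAssocRing A₂] [Module F A₂]
    [SMulCommClass F A₂ A₂] [IsScalarTower F A₂ A₂]
    (e₁ : A₁) (he₁ : ∀ x : A₁, e₁ * x = 0 → x = 0)
    (e₂ : A₂) (he₂ : ∀ x : A₂, e₂ * x = 0 → x = 0)
    (φ : A₁ × A₂ →ₗ[F] A₁ × A₂)
    (hφ : ∀ x y : A₁ × A₂, φ (x * y) = δ • (φ x * y + x * φ y)) :
    (∀ x : A₁, (φ (x, 0)).2 = 0) ∧ (∀ y : A₂, (φ (0, y)).1 = 0) :=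
  delta_derivation_preserves_factors_general δ hδ e₁ he₁ e₂ he₂ φ hφ
end

section
/- For every z ∈ Z, the odd F-linear map φ : V → V defined by φ(a,b) = (zb, 0) is an odd ½-superderivation of V = V_{1/2}(Z,D). Moreover, if z ≠ 0 then φ does not belong to the supercentroid of V, so φ is a nontrivial odd ½-superderivation. -/
def oddMul {Z : Type*} [CommRing Z] (z : Z) (v : Z × Z) : Z × Z := (z * v.2, 0)

section

variable {F : Type*} [Field F] {Z : Type*} [CommRing Z] [Algebra F Z] (D : Z →ₗ[F] Z)

theorem oddMul_vmul_of_even (z : Z) {x : Z × Z} (hx : x.2 = 0) (y : Z × Z) :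
    oddMul z (vmul D x y) = (1 / 2 : F) • (vmul D (oddMul z x) y + vmul D x (oddMul z y)) := by
  obtain ⟨a, b⟩ := x
  obtain ⟨c, d⟩ := y
  subst hx
  ext
  · simp [oddMul, vmul, Algebra.smul_def]
    ring
  · simp [oddMul, vmul]

theorem oddMul_vmul_of_odd (z : Z) {x : Z × Z} (hx : x.1 = 0) (y : Z × Z) :
    oddMul z (vmul D x y) = (1 / 2 : F) • (vmul D (oddMul z x) y - vmul D x (oddMul z y)) := by
  obtain ⟨a, b⟩ := x
  obtain ⟨c, d⟩ := y
  subst hx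
  ext <;> simp [oddMul, vmul, Algebra.smul_def] <;> ring

theorem isOddSuperDer_half_oddMul (z : Z) : IsOddSuperDer D (1 / 2 : F) (oddMul z) :=
  ⟨fun _ => mul_zero z, fun _ => rfl,
    fun _ y hx _ => oddMul_vmul_of_even D z hx y, fun _ y hx _ => oddMul_vmul_of_odd D z hx y⟩

theorem not_inOddSupercentroid_oddMul (h2 : (2 : F) ≠ 0) {z : Z} (hz : z ≠ 0) :
    ¬ InOddSupercentroid D (oddMul z) := by
  rintro ⟨-, -, -, -, hodd⟩
  -- `χ((0,1)·(1,0)) = -(0,1)·χ(1,0)` reads `(z/2, 0) = 0`.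
  have h := congrArg Prod.fst (hodd (0, 1) (1, 0) rfl (Or.inr rfl))
  exact hz (by simpa [oddMul, vmul, h2] using h)

end

theorem odd_half_superderivation_example_general
    {F : Type*} [Field F] (h2 : (2 : F) ≠ 0)
    {Z : Type*} [CommRing Z] [Algebra F Z]
(D : Z →ₗ[F] Z)
    (z : Z) :
    IsOddSuperDer D (1 / 2 : F) (fun v : Z × Z => ((z * v.2, 0) : Z × Z)) ∧
    (z ≠ 0 → ¬ InOddSupercentroid D (fun v : Z × Z => ((z * v.2, 0) : Z × Z))) :=
  ⟨isOddSuperDer_half_oddMul D z, not_inOddSupercentroid_oddMul D h2⟩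

/-- (char F ≠ 2)  For every `z ∈ Z` the odd map `φ(a,b) = (zb, 0)` is an odd
½-superderivation of `V_{1/2}(Z,D)`, and for `z ≠ 0` it does not lie in the
supercentroid, hence is a nontrivial odd ½-superderivation. -/
theorem odd_half_superderivation_example
    {F : Type*} [Field F] (h2 : (2 : F) ≠ 0)
    {Z : Type*} [CommRing Z] [Algebra F Z]
(D : Z →ₗ[F] Z)
    (hD : ∀ a b : Z, D (a * b) = D a * b + a * D b)
    (hD0 : D ≠ 0)
    (hsimple : ∀ I : Ideal Z, (∀ x ∈ I, D x ∈ I) → I = ⊥ ∨ I = ⊤)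
    (hker : ∀ a : Z, D a = 0 → ∃ c : F, a = algebraMap F Z c)
    (z : Z) :
    IsOddSuperDer D (1 / 2 : F) (fun v : Z × Z => ((z * v.2, 0) : Z × Z)) ∧
    (z ≠ 0 → ¬ InOddSupercentroid D (fun v : Z × Z => ((z * v.2, 0) : Z × Z))) :=
  odd_half_superderivation_example_general h2 D z
end

section
/- Assume F has characteristic 3. For every α ∈ F and every z ∈ Z, the odd F-linear map φ : V → V defined by φ(a,b) = (αD(D(b)) + zb, αD(a)) is an odd ½-superderivation of V = V_{1/2}(Z,D). -/
section

variable {F : Type*} [Field F] {Z : Type*} [CommRing Z] [Algebra F Z] (D : Z →ₗ[F] Z)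

theorem vmul_add_left (u v y : Z × Z) : vmul D (u + v) y = vmul D u y + vmul D v y := by
  ext <;> simp only [vmul, Prod.fst_add, Prod.snd_add, map_add, Algebra.smul_def] <;> ring

theorem vmul_add_right (x u v : Z × Z) : vmul D x (u + v) = vmul D x u + vmul D x v := by
  ext <;> simp only [vmul, Prod.fst_add, Prod.snd_add, map_add, Algebra.smul_def] <;> ring

theorem vmul_smul_left (c : F) (u y : Z × Z) : vmul D (c • u) y = c • vmul D u y := by
  ext <;> simp only [vmul, Prod.smul_fst, Prod.smul_snd, map_smul] <;>
    simp only [Algebra.smul_def] <;> ring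

theorem vmul_smul_right (c : F) (x u : Z × Z) : vmul D x (c • u) = c • vmul D x u := by
  ext <;> simp only [vmul, Prod.smul_fst, Prod.smul_snd, map_smul] <;>
    simp only [Algebra.smul_def] <;> ring

variable {D} {δ : F} {φ ψ : Z × Z → Z × Z}

theorem IsOddSuperDer.of_homogeneous (heven : ∀ a, (φ (a, 0)).1 = 0)
    (hodd : ∀ b, (φ (0, b)).2 = 0)
    (hee : ∀ a c, φ (vmul D (a, 0) (c, 0)) =
      δ • (vmul D (φ (a, 0)) (c, 0) + vmul D (a, 0) (φ (c, 0))))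
    (heo : ∀ a d, φ (vmul D (a, 0) (0, d)) =
      δ • (vmul D (φ (a, 0)) (0, d) + vmul D (a, 0) (φ (0, d))))
    (hoe : ∀ b c, φ (vmul D (0, b) (c, 0)) =
      δ • (vmul D (φ (0, b)) (c, 0) - vmul D (0, b) (φ (c, 0))))
    (hoo : ∀ b d, φ (vmul D (0, b) (0, d)) =
      δ • (vmul D (φ (0, b)) (0, d) - vmul D (0, b) (φ (0, d)))) :
    IsOddSuperDer D δ φ := by
  refine ⟨heven, hodd, ?_, ?_⟩
  · rintro ⟨a, b⟩ ⟨c, d⟩ (rfl : b = 0) ((rfl : c = 0) | (rfl : d = 0))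
    exacts [heo a d, hee a c]
  · rintro ⟨a, b⟩ ⟨c, d⟩ (rfl : a = 0) ((rfl : c = 0) | (rfl : d = 0))
    exacts [hoo b d, hoe b c]

theorem IsOddSuperDer.add (hφ : IsOddSuperDer D δ φ) (hψ : IsOddSuperDer D δ ψ) :
    IsOddSuperDer D δ (φ + ψ) := by
  obtain ⟨hφ₁, hφ₂, hφ₃, hφ₄⟩ := hφ
  obtain ⟨hψ₁, hψ₂, hψ₃, hψ₄⟩ := hψ
  refine ⟨fun a => ?_, fun b => ?_, fun x y hx hy => ?_, fun x y hx hy => ?_⟩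
  · simp [hφ₁, hψ₁]
  · simp [hφ₂, hψ₂]
  · simp only [Pi.add_apply, hφ₃ x y hx hy, hψ₃ x y hx hy, vmul_add_left, vmul_add_right]
    rw [← smul_add]; abel_nf
  · simp only [Pi.add_apply, hφ₄ x y hx hy, hψ₄ x y hx hy, vmul_add_left, vmul_add_right]
    rw [← smul_add]; abel_nf

theorem IsOddSuperDer.smul (hφ : IsOddSuperDer D δ φ) (c : F) :
    IsOddSuperDer D δ (c • φ) := by
  obtain ⟨hφ₁, hφ₂, hφ₃, hφ₄⟩ := hφ
  refine ⟨fun a => ?_, fun b => ?_, fun x y hx hy => ?_, fun x y hx hy => ?_⟩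
  · simp [hφ₁]
  · simp [hφ₂]
  · simp only [Pi.smul_apply, hφ₃ x y hx hy, vmul_smul_left, vmul_smul_right, ← smul_add]
    exact smul_comm c δ _
  · simp only [Pi.smul_apply, hφ₄ x y hx hy, vmul_smul_left, vmul_smul_right, ← smul_sub]
    exact smul_comm c δ _

theorem isOddSuperDer_half_mul_snd (z : Z) :
    IsOddSuperDer D (1 / 2 : F) (fun v : Z × Z => ((z * v.2, 0) : Z × Z)) := by
  refine .of_homogeneous (fun _ => mul_zero z) (fun _ => rfl) ?_ ?_ ?_ ?_ <;> intros <;>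
    ext <;> simp only [vmul, Prod.smul_fst, Prod.smul_snd, Prod.fst_add, Prod.snd_add,
      Prod.fst_sub, Prod.snd_sub, map_zero] <;> simp only [Algebra.smul_def] <;> ring

theorem half_smul_eq_neg [CharP F 3] {M : Type*} [AddCommGroup M] [Module F M] (w : M) :
    (1 / 2 : F) • w = -w := by
  have h3 : (3 : F) = 0 := CharP.cast_eq_zero F 3
  have h2 : (2 : F) ≠ 0 := fun h => one_ne_zero (by linear_combination h3 - h : (1 : F) = 0)
  rw [← neg_one_smul F w]
  congr 1
  field_simp
  linear_combination h3

theorem isOddSuperDer_half_deriv_of_charP_three [CharP F 3]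
    (hD : ∀ a b : Z, D (a * b) = D a * b + a * D b) :
    IsOddSuperDer D (1 / 2 : F) (fun v : Z × Z => ((D (D v.2), D v.1) : Z × Z)) := by
  have h3 : (3 : Z) = 0 := by
    rw [← map_ofNat (algebraMap F Z) 3, CharP.ofNat_eq_zero F 3, map_zero]
  refine .of_homogeneous (fun _ => by simp) (fun _ => map_zero D)
    (fun a c => ?ee) (fun a d => ?eo) (fun b c => ?oe) (fun b d => ?oo) <;>
    ext <;> simp only [vmul, half_smul_eq_neg, Prod.fst_add, Prod.snd_add, Prod.fst_sub,
      Prod.snd_sub, Prod.fst_neg, Prod.snd_neg, map_zero, map_neg, map_add, map_sub, hD]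
  case eo.fst => linear_combination -(D a * D d) * h3
  case oe.fst => linear_combination -(D b * D c) * h3
  all_goals ring

end

theorem odd_half_superderivation_example_char3_general
    {F : Type*} [Field F] [CharP F 3]
    {Z : Type*} [CommRing Z] [Algebra F Z]
(D : Z →ₗ[F] Z)
    (hD : ∀ a b : Z, D (a * b) = D a * b + a * D b)
    (α : F) (z : Z) :
    IsOddSuperDer D (1 / 2 : F)
      (fun v : Z × Z => ((α • D (D v.2) + z * v.2, α • D v.1) : Z × Z)) := by
  convert ((isOddSuperDer_half_deriv_of_charP_three hD).smul α).add
    (isOddSuperDer_half_mul_snd z) using 1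
  ext v <;> simp

/-- (char F = 3)  For every `α ∈ F` and `z ∈ Z` the odd map
`φ(a,b) = (αD(D(b)) + zb, αD(a))` is an odd ½-superderivation of `V_{1/2}(Z,D)`. -/
theorem odd_half_superderivation_example_char3
    {F : Type*} [Field F] [CharP F 3]
    {Z : Type*} [CommRing Z] [Algebra F Z]
(D : Z →ₗ[F] Z)
    (hD : ∀ a b : Z, D (a * b) = D a * b + a * D b)
    (hD0 : D ≠ 0)
    (hsimple : ∀ I : Ideal Z, (∀ x ∈ I, D x ∈ I) → I = ⊥ ∨ I = ⊤)
    (hker : ∀ a : Z, D a = 0 → ∃ c : F, a = algebraMap F Z c)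
    (α : F) (z : Z) :
    IsOddSuperDer D (1 / 2 : F)
      (fun v : Z × Z => ((α • D (D v.2) + z * v.2, α • D v.1) : Z × Z)) :=
  odd_half_superderivation_example_char3_general D hD α z
end

section
/- Let δ ∈ F with δ ∉ {1/2, 1, 2}. Then every δ-derivation of V = V_{1/2}(Z,D) is zero. -/
theorem eq_zero_of_smul_eq_smul {F M : Type*} [DivisionRing F] [AddCommGroup M] [Module F M]
    {c c' : F} {z : M} (hc : c ≠ c') (h : c • z = c' • z) : z = 0 := by
  by_contra hz
  exact hc (smul_left_injective F hz h)

section DeltaDerivation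

variable {F : Type*} [Field F] {Z : Type*} [CommRing Z] [Algebra F Z] {D : Z →ₗ[F] Z}

def IsDeltaDerivation (D : Z →ₗ[F] Z) (δ : F) (φ : Z × Z →ₗ[F] Z × Z) : Prop :=
  ∀ x y : Z × Z, φ (vmul D x y) = δ • (vmul D (φ x) y + vmul D x (φ y))

theorem vmul_zero_left (y : Z × Z) : vmul D 0 y = 0 := by
  simp [vmul]

theorem vmul_one_zero_left (x : Z × Z) : vmul D (1, 0) x = (x.1, (1 / 2 : F) • x.2) := by
  simp [vmul]

theorem vmul_one_zero_right (x : Z × Z) : vmul D x (1, 0) = (x.1, (1 / 2 : F) • x.2) := by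
  simp [vmul]

variable {δ : F} {φ : Z × Z →ₗ[F] Z × Z}

theorem IsDeltaDerivation.map_one_zero (hφ : IsDeltaDerivation D δ φ) (h2 : (2 : F) ≠ 0)
    (hδh : δ ≠ 1 / 2) (hδ1 : δ ≠ 1) : φ (1, 0) = 0 := by
  have : NeZero (2 : F) := ⟨h2⟩
  have h := hφ (1, 0) (1, 0)
  simp only [vmul_one_zero_left, vmul_one_zero_right, smul_zero, Prod.ext_iff, Prod.smul_fst,
    Prod.smul_snd, Prod.fst_add, Prod.snd_add] at h
  obtain ⟨h₁, h₂⟩ := h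
  rw [← add_smul, add_halves, one_smul] at h₂
  refine Prod.ext (eq_zero_of_smul_eq_smul (c := 1) (c' := 2 * δ) ?_ ?_)
    (eq_zero_of_smul_eq_smul (c := 1) (c' := δ) hδ1.symm ?_)
  · contrapose! hδh
    field_simp
    linear_combination hδh.symm
  · linear_combination (norm := module) h₁
  · linear_combination (norm := module) h₂

theorem IsDeltaDerivation.map_vmul_one_zero_left (hφ : IsDeltaDerivation D δ φ)
    (h0 : φ (1, 0) = 0) (x : Z × Z) : φ (vmul D (1, 0) x) = δ • vmul D (1, 0) (φ x) := by
  rw [hφ, h0, vmul_zero_left, zero_add]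

theorem IsDeltaDerivation.map_even (hφ : IsDeltaDerivation D δ φ) (h0 : φ (1, 0) = 0)
    (hδ1 : δ ≠ 1) (hδ2 : δ ≠ 2) (a : Z) : φ (a, 0) = 0 := by
  have h := hφ.map_vmul_one_zero_left h0 (a, 0)
  simp only [vmul_one_zero_left, smul_zero, Prod.ext_iff, Prod.smul_fst, Prod.smul_snd] at h
  obtain ⟨h₁, h₂⟩ := h
  refine Prod.ext (eq_zero_of_smul_eq_smul (c := 1) (c' := δ) hδ1.symm ?_)
    (eq_zero_of_smul_eq_smul (c := 1) (c' := δ * (1 / 2)) ?_ ?_)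
  · linear_combination (norm := module) h₁
  · contrapose! hδ2
    have h2 : (2 : F) ≠ 0 := by
      rintro h
      simp [h] at hδ2
    field_simp at hδ2
    linear_combination hδ2.symm
  · linear_combination (norm := module) h₂

theorem IsDeltaDerivation.map_odd (hφ : IsDeltaDerivation D δ φ) (h0 : φ (1, 0) = 0)
    (h2 : (2 : F) ≠ 0) (hδh : δ ≠ 1 / 2) (hδ1 : δ ≠ 1) (b : Z) : φ (0, b) = 0 := by
  have h := hφ.map_vmul_one_zero_left h0 (0, b)
  have hb : vmul D (1, 0) (0, b) = (1 / 2 : F) • (0, b) := by simp [vmul_one_zero_left]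
  rw [hb, map_smul, vmul_one_zero_left] at h
  simp only [Prod.ext_iff, Prod.smul_fst, Prod.smul_snd] at h
  obtain ⟨h₁, h₂⟩ := h
  refine Prod.ext (eq_zero_of_smul_eq_smul (c := 1 / 2) (c' := δ) hδh.symm ?_)
    (eq_zero_of_smul_eq_smul (c := 1 / 2) (c' := δ * (1 / 2)) ?_ ?_)
  · linear_combination (norm := module) h₁
  · contrapose! hδ1
    field_simp at hδ1
    linear_combination hδ1.symm
  · linear_combination (norm := module) h₂

end DeltaDerivation

theorem delta_derivation_of_V_is_zero_general
    {F : Type*} [Field F] (h2 : (2 : F) ≠ 0)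
    {Z : Type*} [CommRing Z] [Algebra F Z]
(D : Z →ₗ[F] Z)
    (δ : F) (hδh : δ ≠ 1 / 2) (hδ1 : δ ≠ 1) (hδ2 : δ ≠ 2)
    (φ : Z × Z →ₗ[F] Z × Z)
    (hder : ∀ x y : Z × Z, φ (vmul D x y) = δ • (vmul D (φ x) y + vmul D x (φ y))) :
    φ = 0 := by
  have hφ : IsDeltaDerivation D δ φ := hder
  have h0 := hφ.map_one_zero h2 hδh hδ1
  exact LinearMap.prod_ext (LinearMap.ext (hφ.map_even h0 hδ1 hδ2))
    (LinearMap.ext (hφ.map_odd h0 h2 hδh hδ1))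

/-- (char F ≠ 2)  For `δ ∉ {1/2, 1, 2}`, every `δ`-derivation of `V_{1/2}(Z,D)` is
zero. -/
theorem delta_derivation_of_V_is_zero
    {F : Type*} [Field F] (h2 : (2 : F) ≠ 0)
    {Z : Type*} [CommRing Z] [Algebra F Z]
(D : Z →ₗ[F] Z)
    (hD : ∀ a b : Z, D (a * b) = D a * b + a * D b)
    (hD0 : D ≠ 0)
    (hsimple : ∀ I : Ideal Z, (∀ x ∈ I, D x ∈ I) → I = ⊥ ∨ I = ⊤)
    (hker : ∀ a : Z, D a = 0 → ∃ c : F, a = algebraMap F Z c)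
    (δ : F) (hδh : δ ≠ 1 / 2) (hδ1 : δ ≠ 1) (hδ2 : δ ≠ 2)
    (φ : Z × Z →ₗ[F] Z × Z)
    (hder : ∀ x y : Z × Z, φ (vmul D x y) = δ • (vmul D (φ x) y + vmul D x (φ y))) :
    φ = 0 :=
  delta_derivation_of_V_is_zero_general h2 D δ hδh hδ1 hδ2 φ hder
end

section
/- Let F be a field of characteristic ≠ 2 and let J be a (non-unital) F-algebra with a Z₂-grading J = J₀ ⊕ J₁ (so Jᵢ·Jⱼ ⊆ J_{i+j mod 2}), such that: every element of J₀ commutes with every element of J (a·y = y·a for all a ∈ J₀, y ∈ J); there is e ∈ J₀ with e·a = a for all a ∈ J₀ and e·z = (1/2)z for all z ∈ J₁; and the only a ∈ J₀ with a·z = 0 for all z ∈ J₁ is a = 0. Let J^# = F·1 ⊕ J be the unitization of J (the unital F-algebra obtained by adjoining an identity element 1). Then every ½-derivation φ of J^# is a scalar multiple of the identity map: there exists α ∈ F with φ(x) = αx for all x ∈ J^#. -/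
/-- Let `F` be a field of characteristic ≠ 2 and `J` a (non-unital) `F`-algebra with a
`ℤ₂`-grading `J = J₀ ⊕ J₁` such that every element of `J₀` commutes with every element
of `J`, there is `e ∈ J₀` acting as identity on `J₀` and as `1/2` on `J₁`, and the only
element of `J₀` annihilating all of `J₁` is `0`.  Then every ½-derivation of the
unitization `J^# = F·1 ⊕ J` is a scalar multiple of the identity map. -/
theorem half_derivation_of_unitization_is_scalar
    {F : Type*} [Field F] (h2 : (2 : F) ≠ 0)
    {J : Type*} [NonUnitalNonAssocRing J] [Module F J]
    [SMulCommClass F J J] [IsScalarTower F J J]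
    (J0 J1 : Submodule F J)
    (hsup : J0 ⊔ J1 = ⊤) (hinf : J0 ⊓ J1 = ⊥)
    (h00 : ∀ a ∈ J0, ∀ b ∈ J0, a * b ∈ J0)
    (h01 : ∀ a ∈ J0, ∀ b ∈ J1, a * b ∈ J1)
    (h10 : ∀ a ∈ J1, ∀ b ∈ J0, a * b ∈ J1)
    (h11 : ∀ a ∈ J1, ∀ b ∈ J1, a * b ∈ J0)
    (hcomm : ∀ a ∈ J0, ∀ y : J, a * y = y * a)
    (e : J) (he0 : e ∈ J0)
    (heJ0 : ∀ a ∈ J0, e * a = a)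
    (heJ1 : ∀ z ∈ J1, e * z = (1 / 2 : F) • z)
    (hfaith : ∀ a ∈ J0, (∀ z ∈ J1, a * z = 0) → a = 0)
    (φ : Unitization F J →ₗ[F] Unitization F J)
    (hφ : ∀ x y : Unitization F J, φ (x * y) = (1 / 2 : F) • (φ x * y + x * φ y)) :
    ∃ α : F, ∀ x : Unitization F J, φ x = α • x := by
  have hs : (2 : F) * (1/2 : F) = 1 := mul_one_div_cancel h2
  have hq : ((1/2 : F) * (1/2 : F)) ≠ 0 :=
    mul_ne_zero (one_div_ne_zero h2) (one_div_ne_zero h2)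
  set c := φ 1 with hc
  -- φ x = c * x
  have hL : ∀ x, φ x = c * x := by
    intro x
    have h := hφ 1 x
    rw [one_mul, one_mul] at h
    have h' := congrArg (fun m => (2 : F) • m) h
    simp only [smul_smul, hs, one_smul] at h'
    rw [two_smul] at h'
    exact add_right_cancel h'
  -- key identity
  have hkey : ∀ x y : Unitization F J,
      c * (x * y) = (1/2 : F) • (c * x * y + x * (c * y)) := by
    intro x y
    have h := hφ x y
    rw [hL x, hL y, hL (x*y)] at h
    exact h
  -- decompose c.snd
  obtain ⟨c0, hc0, c1, hc1, hsum⟩ :=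
    Submodule.mem_sup.mp (by rw [hsup]; exact Submodule.mem_top (x := c.snd))
  have hcrepr : c = Unitization.inl c.fst + (((c0 + c1) : J) : Unitization F J) := by
    rw [hsum, Unitization.inl_fst_add_inr_snd_eq]
  set r := c.fst with hr
  -- products with e
  have hee : e * e = e := heJ0 e he0
  have hc0e : c0 * e = c0 := by rw [← hcomm e he0 c0, heJ0 c0 hc0]
  have hc1e : c1 * e = (1/2 : F) • c1 := by rw [← hcomm e he0 c1, heJ1 c1 hc1]
  have hec0 : e * c0 = c0 := heJ0 c0 hc0
  have hec1 : e * c1 = (1/2 : F) • c1 := heJ1 c1 hc1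
  -- multiplication formula: c * inr u
  have hcmul : ∀ u : J, c * (u : Unitization F J) =
      ((r • u + (c0 * u + c1 * u) : J) : Unitization F J) := by
    intro u
    rw [hcrepr, add_mul, Unitization.inl_mul_inr, ← Unitization.inr_mul, add_mul]
    simp only [Unitization.inr_add]
  -- Equation A : with x = y = e, deduce c1 = 0
  have hc1zero : c1 = 0 := by
    have hA := hkey (e : Unitization F J) (e : Unitization F J)
    rw [← Unitization.inr_mul, hee, hcmul e] at hA
    set w : J := r • e + (c0 + (1/2:F) • c1) with hw
    rw [show ((r • e + (c0 * e + c1 * e) : J) : Unitization F J) = (w : Unitization F J) by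
      rw [hw, hc0e, hc1e]] at hA
    rw [← Unitization.inr_mul, ← Unitization.inr_mul, ← Unitization.inr_add,
      ← Unitization.inr_smul] at hA
    have hA' := Unitization.inr_injective hA
    -- compute w * e and e * w
    have hwe : w * e = r • e + c0 + ((1/2:F) * (1/2:F)) • c1 := by
      rw [hw, add_mul, add_mul, smul_mul_assoc, hee, hc0e, smul_mul_assoc, hc1e,
        smul_smul]
      abel
    have hew : e * w = r • e + c0 + ((1/2:F) * (1/2:F)) • c1 := by
      rw [hw, mul_add, mul_add, mul_smul_comm, hee, hec0, mul_smul_comm, hec1,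
        smul_smul]
      abel
    rw [hwe, hew, hw, ← two_smul F, smul_smul, one_div_mul_cancel h2, one_smul,
      ← add_assoc] at hA'
    have h14 : (1/2 : F) • c1 = ((1/2:F) * (1/2:F)) • c1 := add_left_cancel hA'
    have h4 : ((1/2 : F) - (1/2:F) * (1/2:F)) • c1 = 0 := by
      rw [sub_smul, h14, sub_self]
    have heq : (1/2 : F) - (1/2:F) * (1/2:F) = (1/2:F) * (1/2:F) := by
      linear_combination (-(1/2 : F)) * hs
    rw [heq] at h4
    exact (smul_eq_zero.mp h4).resolve_left hq
  -- Equation B : with x = e, y = z ∈ J1, deduce c0 * z = 0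
  have hc0z : ∀ z ∈ J1, c0 * z = 0 := by
    intro z hz
    have hez : e * z = (1/2 : F) • z := heJ1 z hz
    have hc0zJ1 : c0 * z ∈ J1 := h01 c0 hc0 z hz
    have hB := hkey (e : Unitization F J) (z : Unitization F J)
    rw [← Unitization.inr_mul, hez, Unitization.inr_smul] at hB
    have hlhs : c * ((1/2:F) • (z : Unitization F J)) =
        (((1/2:F) • (r • z) + (1/2:F) • (c0 * z) : J) : Unitization F J) := by
      rw [← Unitization.inr_smul, hcmul, hc1zero, zero_mul, add_zero, mul_smul_comm,
        smul_comm r ((1/2 : F)) z]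
    rw [hlhs, hcmul e, hcmul z] at hB
    simp only [hc1zero, zero_mul, add_zero] at hB
    rw [hc0e] at hB
    rw [← Unitization.inr_mul, ← Unitization.inr_mul, ← Unitization.inr_add,
      ← Unitization.inr_smul] at hB
    have hB' := Unitization.inr_injective hB
    have heq1 : (r • e + c0) * z = r • ((1/2:F) • z) + c0 * z := by
      rw [add_mul, smul_mul_assoc, hez]
    have heq2 : e * (r • z + c0 * z) = r • ((1/2:F) • z) + (1/2:F) • (c0 * z) := by
      rw [mul_add, mul_smul_comm, hez, heJ1 _ hc0zJ1]
    rw [heq1, heq2] at hB'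
    have expand : (1/2:F) • (r • ((1/2:F) • z) + c0 * z + (r • ((1/2:F) • z)
        + (1/2:F) • (c0 * z)))
        = (1/2:F) • (r • z) + ((1/2:F) • (c0 * z) + ((1/2:F) * (1/2:F)) • (c0 * z)) := by
      match_scalars
      · linear_combination ((1/2:F) * r) * hs
      · ring
    rw [expand, ← add_assoc] at hB'
    have h4 : ((1/2:F) * (1/2:F)) • (c0 * z) = 0 := left_eq_add.mp hB'
    exact (smul_eq_zero.mp h4).resolve_left hq
  -- conclude
  have hc0zero : c0 = 0 := hfaith c0 hc0 hc0z
  have hcfin : c = Unitization.inl r := by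
    rw [hcrepr, hc0zero, hc1zero, add_zero, Unitization.inr_zero, add_zero]
  refine ⟨r, fun x => ?_⟩
  rw [hL x, hcfin]
  refine Unitization.ext ?_ ?_
  · simp [Unitization.fst_mul, Unitization.fst_smul, smul_eq_mul]
  · simp [Unitization.snd_mul, Unitization.snd_smul]
end
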